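/- arXiv:1811.08683 — 2 statements merged into one kernel-verified Lean document; each statement's English description precedes it below -/
import Mathlib

section
/- For a connected weighted graph with Laplacian B = K B_d K^T (K the incidence matrix, B_d the diagonal matrix of positive edge weights), and any vector ν_rs with +1 at node r, -1 at node s, and zeros elsewhere, the pseudoinverse identity (B + b_rs ν_rs ν_rs^T)^† ν_rs = (1 + b_rs ν_rs^T B^† ν_rs)^{-1} B^† ν_rs holds, provided 1 + b_rs ν_rs^T B^† ν_rs ≠ 0. -/
/-!
The dipole `ν` is orthogonal to the kernel of the Laplacian `B` (the constants, by
connectedness), so `ν = B y` with `y = B† ν`. Then `M y = (1 + b νᵀ y) ν` for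
`M = B + b ν νᵀ`, and every kernel vector of `M` lies in the kernel of `B`, hence is
orthogonal to `y`. Since `M† M` fixes every vector orthogonal to `ker M`,
`M† ν = (1 + b νᵀ y)⁻¹ M† M y = (1 + b νᵀ y)⁻¹ y`.
-/

open Matrix BigOperators

/-- The weighted Laplacian of a weight function `w` on `Fin N`. -/
def lapMat {N : ℕ} (w : Fin N → Fin N → ℝ) : Matrix (Fin N) (Fin N) ℝ :=
  fun i j => if i = j then ∑ k, w i k else - w i j

/-- Symmetric, nonnegative weights with zero diagonal. -/
def IsWeight {N : ℕ} (w : Fin N → Fin N → ℝ) : Prop :=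
  (∀ i j, w i j = w j i) ∧ (∀ i j, 0 ≤ w i j) ∧ (∀ i, w i i = 0)

/-- The simple graph whose edges are the pairs with nonzero weight. -/
def wGraph {N : ℕ} (w : Fin N → Fin N → ℝ) : SimpleGraph (Fin N) where
  Adj i j := i ≠ j ∧ (w i j ≠ 0 ∨ w j i ≠ 0)
  symm := ⟨fun i j ⟨h1, h2⟩ => ⟨h1.symm, h2.symm⟩⟩
  loopless := ⟨fun i h => h.1 rfl⟩

/-- The dipole vector `ν_rs`: `+1` at `r`, `-1` at `s`, `0` elsewhere. -/
def dipole {N : ℕ} (r s : Fin N) : Fin N → ℝ :=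
  fun i => (if i = r then (1:ℝ) else 0) - (if i = s then (1:ℝ) else 0)

/-- `Bd` is the Moore-Penrose pseudoinverse of `B` (the four Penrose axioms). -/
def IsMoorePenrose {N : ℕ} (B Bd : Matrix (Fin N) (Fin N) ℝ) : Prop :=
  B * Bd * B = B ∧ Bd * B * Bd = Bd ∧ (B * Bd)ᵀ = B * Bd ∧ (Bd * B)ᵀ = Bd * B

variable {N : ℕ}

section MoorePenrose

variable {A A' : Matrix (Fin N) (Fin N) ℝ}

lemma IsMoorePenrose.transpose (h : IsMoorePenrose A A') : IsMoorePenrose Aᵀ A'ᵀ := by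
  obtain ⟨h₁, h₂, h₃, h₄⟩ := h
  refine ⟨?_, ?_, ?_, ?_⟩
  · rw [← transpose_mul, ← transpose_mul, ← Matrix.mul_assoc, h₁]
  · rw [← transpose_mul, ← transpose_mul, ← Matrix.mul_assoc, h₂]
  · rw [← transpose_mul, h₄, h₄]
  · rw [← transpose_mul, h₃, h₃]

lemma IsMoorePenrose.dotProduct_mulVec_eq_zero (h : IsMoorePenrose A A') {z : Fin N → ℝ}
    (hz : A *ᵥ z = 0) (x : Fin N → ℝ) : z ⬝ᵥ A' *ᵥ x = 0 := by
  rw [← h.2.1, ← mulVec_mulVec, dotProduct_mulVec, ← mulVec_transpose, h.2.2.2,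
    ← mulVec_mulVec, hz, mulVec_zero, zero_dotProduct]

lemma IsMoorePenrose.mulVec_mulVec_cancel (h : IsMoorePenrose A A') {x : Fin N → ℝ}
    (hx : ∀ z, A *ᵥ z = 0 → z ⬝ᵥ x = 0) : A' *ᵥ A *ᵥ x = x := by
  set d := x - A' *ᵥ A *ᵥ x
  have hd : A *ᵥ d = 0 := by
    rw [mulVec_sub, mulVec_mulVec, mulVec_mulVec, h.1, sub_self]
  have hdd : d ⬝ᵥ d = 0 := by
    conv_lhs => rw [dotProduct_sub]
    rw [hx d hd, h.dotProduct_mulVec_eq_zero hd, sub_self]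
  exact (sub_eq_zero.mp (dotProduct_self_eq_zero.mp hdd)).symm

lemma IsMoorePenrose.mul_mulVec_cancel (h : IsMoorePenrose A A') {x : Fin N → ℝ}
    (hx : ∀ z, Aᵀ *ᵥ z = 0 → z ⬝ᵥ x = 0) : A *ᵥ A' *ᵥ x = x := by
  have := h.transpose.mulVec_mulVec_cancel hx
  rwa [mulVec_mulVec, ← transpose_mul, h.2.2.1, ← mulVec_mulVec] at this

end MoorePenrose

section RankOne

variable {B : Matrix (Fin N) (Fin N) ℝ} {ν y : Fin N → ℝ} {b : ℝ}

lemma add_smul_vecMulVec_mulVec (x : Fin N → ℝ) :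
    (B + b • vecMulVec ν ν) *ᵥ x = B *ᵥ x + (b * (ν ⬝ᵥ x)) • ν := by
  rw [add_mulVec, smul_mulVec, vecMulVec_mulVec, op_smul_eq_smul, smul_smul]

lemma mulVec_eq_zero_of_add_smul_vecMulVec (hBsym : Bᵀ = B) (hy : B *ᵥ y = ν)
    (hden : 1 + b * (ν ⬝ᵥ y) ≠ 0) {z : Fin N → ℝ}
    (hz : (B + b • vecMulVec ν ν) *ᵥ z = 0) : B *ᵥ z = 0 := by
  rw [add_smul_vecMulVec_mulVec] at hz
  have hBz : B *ᵥ z = -((b * (ν ⬝ᵥ z)) • ν) := eq_neg_of_add_eq_zero_left hz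
  have hνz : ν ⬝ᵥ z = -(b * (ν ⬝ᵥ z)) * (ν ⬝ᵥ y) := by
    calc ν ⬝ᵥ z = y ⬝ᵥ B *ᵥ z := by
          rw [← hy, dotProduct_mulVec, ← mulVec_transpose, hBsym]
      _ = -(b * (ν ⬝ᵥ z)) * (ν ⬝ᵥ y) := by
          rw [hBz, dotProduct_neg, dotProduct_smul, smul_eq_mul, dotProduct_comm y ν]; ring
  have : (ν ⬝ᵥ z) * (1 + b * (ν ⬝ᵥ y)) = 0 := by linear_combination hνz
  rw [hBz, (mul_eq_zero.mp this).resolve_right hden, mul_zero, zero_smul, neg_zero]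

theorem IsMoorePenrose.mulVec_add_smul_vecMulVec {B' M' : Matrix (Fin N) (Fin N) ℝ}
    (hBsym : Bᵀ = B) (hB : IsMoorePenrose B B')
    (hM : IsMoorePenrose (B + b • vecMulVec ν ν) M')
    (hν : ∀ z, B *ᵥ z = 0 → z ⬝ᵥ ν = 0) (hden : 1 + b * (ν ⬝ᵥ B' *ᵥ ν) ≠ 0) :
    M' *ᵥ ν = (1 + b * (ν ⬝ᵥ B' *ᵥ ν))⁻¹ • B' *ᵥ ν := by
  set c := 1 + b * (ν ⬝ᵥ B' *ᵥ ν)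
  have hrange : B *ᵥ B' *ᵥ ν = ν := hB.mul_mulVec_cancel (by rwa [hBsym])
  have hMB' : (B + b • vecMulVec ν ν) *ᵥ B' *ᵥ ν = c • ν := by
    rw [add_smul_vecMulVec_mulVec, hrange, add_smul, one_smul]
  have hMy : (B + b • vecMulVec ν ν) *ᵥ (c⁻¹ • B' *ᵥ ν) = ν := by
    rw [mulVec_smul, hMB', inv_smul_smul₀ hden]
  calc M' *ᵥ ν = M' *ᵥ (B + b • vecMulVec ν ν) *ᵥ (c⁻¹ • B' *ᵥ ν) := by rw [hMy]
    _ = c⁻¹ • B' *ᵥ ν := hM.mulVec_mulVec_cancel fun z hz => by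
      rw [dotProduct_smul, hB.dotProduct_mulVec_eq_zero
        (mulVec_eq_zero_of_add_smul_vecMulVec hBsym hrange hden hz), smul_zero]

end RankOne

section Laplacian

variable {w : Fin N → Fin N → ℝ}

lemma lapMat_transpose (hsymm : ∀ i j, w i j = w j i) : (lapMat w)ᵀ = lapMat w := by
  ext i j
  by_cases h : i = j
  · subst h; rfl
  · simp [lapMat, h, Ne.symm h, hsymm i j]

lemma lapMat_mulVec_apply (hdiag : ∀ i, w i i = 0) (v : Fin N → ℝ) (i : Fin N) :
    (lapMat w *ᵥ v) i = ∑ j, w i j * (v i - v j) := by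
  have hentry : ∀ j,
      lapMat w i j * v j = (if i = j then (∑ k, w i k) * v i else 0) - w i j * v j := by
    intro j
    by_cases h : i = j
    · subst h; simp [lapMat, hdiag i]
    · simp [lapMat, h]
  simp only [mulVec, dotProduct, hentry, Finset.sum_sub_distrib, Finset.sum_ite_eq,
    Finset.mem_univ, if_true, mul_sub, Finset.sum_mul]

lemma two_mul_dotProduct_lapMat_mulVec (hw : IsWeight w) (v : Fin N → ℝ) :
    2 * (v ⬝ᵥ lapMat w *ᵥ v) = ∑ i, ∑ j, w i j * (v i - v j) ^ 2 := by
  have hform : v ⬝ᵥ lapMat w *ᵥ v = ∑ i, ∑ j, w i j * (v i * (v i - v j)) := by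
    simp only [dotProduct, lapMat_mulVec_apply hw.2.2, Finset.mul_sum]
    exact Finset.sum_congr rfl fun i _ => Finset.sum_congr rfl fun j _ => by ring
  -- swapping `i` and `j` and averaging symmetrises `v i * (v i - v j)` into `(v i - v j) ^ 2 / 2`
  have hswap : ∑ i, ∑ j, w i j * (v i * (v i - v j))
      = ∑ i, ∑ j, w i j * (v j * (v j - v i)) := by
    rw [Finset.sum_comm]
    exact Finset.sum_congr rfl fun i _ => Finset.sum_congr rfl fun j _ => by rw [hw.1 j i]
  rw [two_mul, hform]
  nth_rewrite 2 [hswap]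
  simp only [← Finset.sum_add_distrib]
  exact Finset.sum_congr rfl fun i _ => Finset.sum_congr rfl fun j _ => by ring

lemma eq_of_lapMat_mulVec_eq_zero (hw : IsWeight w) (hconn : (wGraph w).Connected)
    {v : Fin N → ℝ} (hv : lapMat w *ᵥ v = 0) (i j : Fin N) : v i = v j := by
  have hnonneg : ∀ i j, 0 ≤ w i j * (v i - v j) ^ 2 :=
    fun i j => mul_nonneg (hw.2.1 i j) (sq_nonneg _)
  have hsum : ∑ i, ∑ j, w i j * (v i - v j) ^ 2 = 0 := by
    rw [← two_mul_dotProduct_lapMat_mulVec hw, hv, dotProduct_zero, mul_zero]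
  have hterm : ∀ i j, w i j * (v i - v j) ^ 2 = 0 := fun i j =>
    (Finset.sum_eq_zero_iff_of_nonneg fun j _ => hnonneg i j).mp
      ((Finset.sum_eq_zero_iff_of_nonneg fun i _ =>
        Finset.sum_nonneg fun j _ => hnonneg i j).mp hsum i (Finset.mem_univ i))
      j (Finset.mem_univ j)
  have hadj : ∀ a b, (wGraph w).Adj a b → v a = v b := by
    intro a b hab
    have hwab : w a b ≠ 0 := hab.2.elim id fun h => hw.1 a b ▸ h
    have := (mul_eq_zero.mp (hterm a b)).resolve_left hwab
    exact sub_eq_zero.mp (pow_eq_zero_iff two_ne_zero |>.mp this)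
  obtain ⟨p⟩ := hconn.preconnected i j
  induction p with
  | nil => rfl
  | cons h _ ih => exact (hadj _ _ h).trans ih

end Laplacian

lemma dotProduct_dipole (z : Fin N → ℝ) (r s : Fin N) : z ⬝ᵥ dipole r s = z r - z s := by
  simp [dipole, dotProduct, mul_sub, Finset.sum_sub_distrib]

theorem woodbury_dipole_identity {N : ℕ} (w : Fin N → Fin N → ℝ)
    (hw : IsWeight w) (hconn : (wGraph w).Connected)
    (r s : Fin N) (brs : ℝ)
    (Bdag Mdag : Matrix (Fin N) (Fin N) ℝ)
    (hB : IsMoorePenrose (lapMat w) Bdag)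
    (hM : IsMoorePenrose
      (lapMat w + brs • Matrix.vecMulVec (dipole r s) (dipole r s)) Mdag)
    (hden : 1 + brs * (dipole r s ⬝ᵥ Bdag.mulVec (dipole r s)) ≠ 0) :
    Mdag.mulVec (dipole r s) =
      (1 + brs * (dipole r s ⬝ᵥ Bdag.mulVec (dipole r s)))⁻¹ •
        Bdag.mulVec (dipole r s) :=
  hB.mulVec_add_smul_vecMulVec (lapMat_transpose hw.1) hM
    (fun z hz => by rw [dotProduct_dipole, eq_of_lapMat_mulVec_eq_zero hw hconn hz r s, sub_self])
    hden
end

section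
/- (Shapiro's electrical lemma) In an unweighted connected graph with unit current injected at r and extracted at s, the current on any edge (m,n) equals (N(r, m→n, s) - N(r, n→m, s)) / N, where N(r, m→n, s) is the number of spanning trees containing a path from r to s that traverses edge (m,n) from m to n, and N is the total number of spanning trees. -/
open Matrix BigOperators

/-- The locality factor `η(r,s) = b_rs ν_rs^T B^† ν_rs`. -/
def eta {N : ℕ} (w : Fin N → Fin N → ℝ) (Bdag : Matrix (Fin N) (Fin N) ℝ)
    (r s : Fin N) : ℝ :=
  w r s * (dipole r s ⬝ᵥ Bdag.mulVec (dipole r s))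

/-- `H` is a spanning tree of the ambient graph. -/
def IsSpanningTree {V : Type*} {G : SimpleGraph V} (H : G.Subgraph) : Prop :=
  H.IsSpanning ∧ H.spanningCoe.IsTree

/-- `H` contains a path from `r` to `s` traversing the edge `(m,n)` from `m`
to `n`. -/
def HasPathThrough {V : Type*} {G : SimpleGraph V} (H : G.Subgraph)
    (r s m n : V) : Prop :=
  ∃ p : H.spanningCoe.Walk r s, p.IsPath ∧ ∃ d ∈ p.darts, d.toProd = (m, n)

/-!
Let `φ(v)` count the spanning two-forests of `G` that separate `r` from `s` and put `v` in the
tree of `r`. Deleting `mn` from a spanning tree whose `r`-`s` path crosses it from `m` to `n`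
gives such a forest with `m` on the side of `r` and `n` on the side of `s`, and adding `mn` back
inverts this; hence `φ(m) - φ(n) = N(r, m→n, s) - N(r, n→m, s)` across every edge. Summing these
differences around a vertex `v` counts, tree by tree, the net flow of the tree's `r`-`s` path out
of `v`, which is `ν_rs(v)`; so `B φ = N ν_rs`. Then `ψ - φ / N` is harmonic, hence takes the same
value at the two ends of the edge `mn`.
-/

namespace SimpleGraph

variable {V : Type*}

/-- `HasPathThrough H` for a simple graph in place of a subgraph. -/
def HasPathVia (T : SimpleGraph V) (r s m n : V) : Prop :=
  ∃ p : T.Walk r s, p.IsPath ∧ ∃ d ∈ p.darts, d.toProd = (m, n)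

def IsTwoForest (F : SimpleGraph V) (r s : V) : Prop :=
  F.IsAcyclic ∧ (∀ v, F.Reachable r v ∨ F.Reachable s v) ∧ ¬F.Reachable r s

lemma Reachable.of_sup_edge {K : SimpleGraph V} {m n a b : V}
    (h : (K ⊔ edge m n).Reachable a b) :
    K.Reachable a b ∨ (K.Reachable a m ∧ K.Reachable n b) ∨
      (K.Reachable a n ∧ K.Reachable m b) := by
  obtain ⟨w⟩ := h
  induction w with
  | nil => exact .inl .rfl
  | cons hadj _ ih =>
    rcases hadj with hK | hE
    · have hK := hK.reachable
      rcases ih with h | ⟨h₁, h₂⟩ | ⟨h₁, h₂⟩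
      · exact .inl (hK.trans h)
      · exact .inr (.inl ⟨hK.trans h₁, h₂⟩)
      · exact .inr (.inr ⟨hK.trans h₁, h₂⟩)
    · rw [edge_adj] at hE
      rcases hE.1 with ⟨rfl, rfl⟩ | ⟨rfl, rfl⟩
      · rcases ih with h | ⟨h₁, h₂⟩ | ⟨-, h₂⟩
        · exact .inr (.inl ⟨.rfl, h⟩)
        · exact .inl (h₁.symm.trans h₂)
        · exact .inl h₂
      · rcases ih with h | ⟨-, h₂⟩ | ⟨h₁, h₂⟩
        · exact .inr (.inr ⟨.rfl, h⟩)
        · exact .inl h₂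
        · exact .inl (h₁.symm.trans h₂)

lemma deleteEdges_sup_edge_of_adj {G : SimpleGraph V} {m n : V} (h : G.Adj m n) :
    G.deleteEdges {s(m, n)} ⊔ edge m n = G := by
  rw [deleteEdges, ← edge, sdiff_sup_self, sup_eq_left, edge_le_iff]
  exact .inr h

lemma sup_edge_deleteEdges_of_not_adj {F : SimpleGraph V} {m n : V} (h : ¬F.Adj m n) :
    (F ⊔ edge m n).deleteEdges {s(m, n)} = F := by
  simp [h]

lemma Walk.IsTrail.reachable_deleteEdges_of_mem_darts {K : SimpleGraph V} {r s : V}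
    {p : K.Walk r s} (hp : p.IsTrail) {d : K.Dart} (hd : d ∈ p.darts) :
    (K.deleteEdges {d.edge}).Reachable r d.fst ∧
      (K.deleteEdges {d.edge}).Reachable d.snd s := by
  induction p with
  | nil => simp at hd
  | cons h q ih =>
    rw [Walk.isTrail_cons] at hp
    rw [Walk.darts_cons, List.mem_cons] at hd
    rcases hd with rfl | hd
    · refine ⟨.rfl, ⟨q.toDeleteEdges _ fun e he => ?_⟩⟩
      rintro rfl
      exact hp.2 he
    · obtain ⟨h₁, h₂⟩ := ih hp.1 hd
      have hne : s(_, _) ≠ d.edge := fun he => hp.2 (he ▸ List.mem_map_of_mem hd)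
      exact ⟨(Adj.reachable (by simpa [h] using hne)).trans h₁, h₂⟩

lemma HasPathVia.adj {T : SimpleGraph V} {r s m n : V} (h : T.HasPathVia r s m n) :
    T.Adj m n := by
  obtain ⟨-, -, ⟨⟨m', n'⟩, hmn⟩, -, hd⟩ := h
  cases hd
  exact hmn

lemma IsTree.hasPathVia_iff {T : SimpleGraph V} (hT : T.IsTree) {r s m n : V}
    {p : T.Walk r s} (hp : p.IsPath) :
    T.HasPathVia r s m n ↔ (m, n) ∈ p.darts.map Dart.toProd := by
  simp only [List.mem_map]
  refine ⟨fun ⟨q, hq, hd⟩ => ?_, fun h => ⟨p, hp, h⟩⟩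
  rwa [(hT.existsUnique_path r s).unique hq hp] at hd

lemma IsTree.isTwoForest_deleteEdges {T : SimpleGraph V} (hT : T.IsTree) {r s m n : V}
    (h : T.HasPathVia r s m n) :
    (T.deleteEdges {s(m, n)}).IsTwoForest r s ∧ (T.deleteEdges {s(m, n)}).Reachable r m ∧
      (T.deleteEdges {s(m, n)}).Reachable s n := by
  obtain ⟨p, hp, ⟨⟨m', n'⟩, hmn⟩, hd, hdp⟩ := h
  cases hdp
  set F := T.deleteEdges {s(m, n)}
  obtain ⟨hrm, hns⟩ := hp.isTrail.reachable_deleteEdges_of_mem_darts hd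
  have hbridge : ¬F.Reachable m n := isAcyclic_iff_forall_adj_isBridge.mp hT.isAcyclic hmn
  refine ⟨⟨hT.isAcyclic.anti (deleteEdges_le _), fun v => ?_, fun hrs => ?_⟩, hrm, hns.symm⟩
  · have hrv : (F ⊔ edge m n).Reachable r v := by
      rw [deleteEdges_sup_edge_of_adj hmn]
      exact hT.connected r v
    rcases hrv.of_sup_edge with h | ⟨-, h⟩ | ⟨h, -⟩
    · exact .inl h
    · exact .inr (hns.symm.trans h)
    · exact (hbridge (hrm.symm.trans h)).elim
  · exact hbridge ((hrm.symm.trans hrs).trans hns.symm)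

section TwoForest

variable {F : SimpleGraph V} {r s m n : V}

lemma IsTwoForest.reachable_iff_not_reachable (hF : F.IsTwoForest r s) :
    F.Reachable s m ↔ ¬F.Reachable r m :=
  ⟨fun hsm hrm => hF.2.2 (hrm.trans hsm.symm), (hF.2.1 m).resolve_left⟩

lemma IsTwoForest.not_reachable (hF : F.IsTwoForest r s) (hrm : F.Reachable r m)
    (hsn : F.Reachable s n) : ¬F.Reachable m n :=
  fun hmn => hF.2.2 ((hrm.trans hmn).trans hsn.symm)

lemma IsTwoForest.sup_edge_adj (hF : F.IsTwoForest r s) (hrm : F.Reachable r m)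
    (hsn : F.Reachable s n) : (F ⊔ edge m n).Adj m n :=
  .inr ((edge_adj ..).mpr ⟨.inl ⟨rfl, rfl⟩, fun h => hF.not_reachable hrm hsn (h ▸ .rfl)⟩)

lemma IsTwoForest.isTree_sup_edge (hF : F.IsTwoForest r s) (hrm : F.Reachable r m)
    (hsn : F.Reachable s n) : (F ⊔ edge m n).IsTree := by
  have hle : F ≤ F ⊔ edge m n := le_sup_left
  refine ⟨(connected_iff_exists_forall_reachable _).mpr ⟨r, fun v => ?_⟩,
    hF.1.sup_edge_of_not_reachable (hF.not_reachable hrm hsn)⟩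
  rcases hF.2.1 v with h | h
  · exact h.mono hle
  · exact (((hrm.mono hle).trans (hF.sup_edge_adj hrm hsn).reachable).trans
      (hsn.mono hle).symm).trans (h.mono hle)

lemma IsTwoForest.hasPathVia_sup_edge (hF : F.IsTwoForest r s) (hrm : F.Reachable r m)
    (hsn : F.Reachable s n) : (F ⊔ edge m n).HasPathVia r s m n := by
  classical
  have hle : F ≤ F ⊔ edge m n := le_sup_left
  obtain ⟨p₁, hp₁⟩ := hrm.exists_isPath
  obtain ⟨p₂, hp₂⟩ := hsn.symm.exists_isPath
  have hdisj : ∀ v ∈ p₁.support, v ∉ p₂.support := fun v h₁ h₂ =>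
    hF.2.2 ((p₁.takeUntil v h₁).reachable.trans (hsn.trans (p₂.takeUntil v h₂).reachable).symm)
  have hmn := hF.sup_edge_adj hrm hsn
  refine ⟨(p₁.mapLe hle).append (.cons hmn (p₂.mapLe hle)), ?_, ⟨(m, n), hmn⟩, ?_, rfl⟩
  · rw [Walk.isPath_def, Walk.support_append, Walk.support_cons, List.tail_cons,
      Walk.support_mapLe_eq_support, Walk.support_mapLe_eq_support]
    exact hp₁.support_nodup.append hp₂.support_nodup fun v h₁ h₂ => hdisj v h₁ h₂
  · simp [Walk.darts_append]

end TwoForest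

lemma ncard_isTree_hasPathVia {G : SimpleGraph V} {r s m n : V} (he : G.Adj m n) :
    {T | T ≤ G ∧ T.IsTree ∧ T.HasPathVia r s m n}.ncard =
      {F | F ≤ G ∧ F.IsTwoForest r s ∧ F.Reachable r m ∧ F.Reachable s n}.ncard := by
  refine Set.ncard_congr (fun T _ => T.deleteEdges {s(m, n)}) ?_ ?_ ?_
  · rintro T ⟨hle, hT, hpath⟩
    exact ⟨(deleteEdges_le _).trans hle, hT.isTwoForest_deleteEdges hpath⟩
  · rintro T₁ T₂ ⟨-, -, h₁⟩ ⟨-, -, h₂⟩ heq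
    rw [← deleteEdges_sup_edge_of_adj h₁.adj, ← deleteEdges_sup_edge_of_adj h₂.adj]
    exact congrArg (· ⊔ edge m n) heq
  · rintro F ⟨hle, hF, hrm, hsn⟩
    refine ⟨F ⊔ edge m n, ⟨sup_le hle ((edge_le_iff G).mpr (.inr he)),
      hF.isTree_sup_edge hrm hsn, hF.hasPathVia_sup_edge hrm hsn⟩,
      sup_edge_deleteEdges_of_not_adj ?_⟩
    exact fun h => hF.not_reachable hrm hsn h.reachable

lemma ncard_isTree_hasPathVia_of_not_adj {G : SimpleGraph V} {r s m n : V} (h : ¬G.Adj m n) :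
    {T | T ≤ G ∧ T.IsTree ∧ T.HasPathVia r s m n}.ncard = 0 := by
  rw [Set.eq_empty_of_forall_notMem (s := {T | _}) fun T hT => h (hT.1 hT.2.2.adj),
    Set.ncard_empty]

noncomputable def twoForestPotential (G : SimpleGraph V) (r s v : V) : ℕ :=
  {F | F ≤ G ∧ F.IsTwoForest r s ∧ F.Reachable r v}.ncard

lemma twoForestPotential_sub_of_adj [Finite V] {G : SimpleGraph V} {r s v u : V}
    (h : G.Adj v u) :
    (G.twoForestPotential r s v : ℝ) - G.twoForestPotential r s u =
      ({T | T ≤ G ∧ T.IsTree ∧ T.HasPathVia r s v u}.ncard : ℝ) -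
        {T | T ≤ G ∧ T.IsTree ∧ T.HasPathVia r s u v}.ncard := by
  set A : V → Set (SimpleGraph V) :=
    fun x => {F | F ≤ G ∧ F.IsTwoForest r s ∧ F.Reachable r x}
  have hdiff : ∀ x y,
      {F | F ≤ G ∧ F.IsTwoForest r s ∧ F.Reachable r x ∧ F.Reachable s y} = A x \ A y := by
    intro x y
    ext F
    simp only [A, Set.mem_ofPred_eq, Set.mem_sdiff]
    constructor
    · rintro ⟨hle, hF, hx, hy⟩
      exact ⟨⟨hle, hF, hx⟩, fun h => hF.reachable_iff_not_reachable.mp hy h.2.2⟩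
    · rintro ⟨⟨hle, hF, hx⟩, hy⟩
      exact ⟨hle, hF, hx, hF.reachable_iff_not_reachable.mpr fun h => hy ⟨hle, hF, h⟩⟩
  have h₁ := Set.ncard_inter_add_ncard_sdiff_eq_ncard (A v) (A u)
  have h₂ := Set.ncard_inter_add_ncard_sdiff_eq_ncard (A u) (A v)
  rw [Set.inter_comm] at h₂
  rw [ncard_isTree_hasPathVia h, ncard_isTree_hasPathVia h.symm, hdiff, hdiff,
    twoForestPotential, twoForestPotential, ← h₁, ← h₂]
  push_cast
  ring

section Flow

variable [Fintype V] [DecidableEq V]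

lemma Walk.sum_count_darts_sub {K : SimpleGraph V} {r s : V} (p : K.Walk r s) (v : V) :
    ∑ u, (((p.darts.map Dart.toProd).count (v, u) : ℝ) -
      (p.darts.map Dart.toProd).count (u, v)) =
      (if v = r then 1 else 0) - if v = s then 1 else 0 := by
  induction p with
  | nil => simp
  | @cons a b _ _ _ ih =>
    simp only [Walk.darts_cons, List.map_cons, List.count_cons, Nat.cast_add, add_sub_add_comm,
      Finset.sum_add_distrib, ih, beq_iff_eq, Prod.mk.injEq]
    simp only [ite_and, Nat.cast_ite, Nat.cast_one, Nat.cast_zero, Finset.sum_sub_distrib,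
      Finset.sum_ite_irrel, Finset.sum_ite_eq, Finset.mem_univ, if_true, Finset.sum_const_zero]
    simp only [eq_comm (a := a), eq_comm (a := b)]
    ring

open Classical in
lemma IsTree.sum_hasPathVia_sub {T : SimpleGraph V} (hT : T.IsTree) (r s v : V) :
    ∑ u, ((if T.HasPathVia r s v u then 1 else 0) - if T.HasPathVia r s u v then 1 else 0 : ℝ) =
      (if v = r then 1 else 0) - if v = s then 1 else 0 := by
  obtain ⟨p, hp, -⟩ := hT.existsUnique_path r s
  have hnodup : (p.darts.map Dart.toProd).Nodup :=
    (Walk.darts_nodup_of_support_nodup hp.support_nodup).map Dart.toProd_injective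
  have hcount : ∀ a b, (if T.HasPathVia r s a b then 1 else 0 : ℝ) =
      (p.darts.map Dart.toProd).count (a, b) := by
    intro a b
    rw [hnodup.count, hT.hasPathVia_iff hp]
    split_ifs <;> simp
  simp only [hcount]
  exact p.sum_count_darts_sub v

lemma sum_ncard_hasPathVia_sub (G : SimpleGraph V) (r s v : V) :
    ∑ u, (({T | T ≤ G ∧ T.IsTree ∧ T.HasPathVia r s v u}.ncard : ℝ) -
      {T | T ≤ G ∧ T.IsTree ∧ T.HasPathVia r s u v}.ncard) =
      {T | T ≤ G ∧ T.IsTree}.ncard * ((if v = r then 1 else 0) - if v = s then 1 else 0) := by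
  classical
  set trees := (Finset.univ : Finset (SimpleGraph V)).filter fun T => T ≤ G ∧ T.IsTree
  have hcard : ∀ a b, ({T | T ≤ G ∧ T.IsTree ∧ T.HasPathVia r s a b}.ncard : ℝ) =
      ∑ T ∈ trees, if T.HasPathVia r s a b then 1 else 0 := by
    intro a b
    rw [← Finset.natCast_card_filter, ← Set.ncard_coe_finset]
    congr 2
    ext T
    simp [trees, and_assoc]
  have htrees : {T | T ≤ G ∧ T.IsTree}.ncard = trees.card := by
    rw [← Set.ncard_coe_finset]
    congr 1
    ext T
    simp [trees]
  simp only [hcard, ← Finset.sum_sub_distrib]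
  rw [Finset.sum_comm,
    Finset.sum_congr rfl fun T hT => (Finset.mem_filter.mp hT).2.2.sum_hasPathVia_sub r s v,
    Finset.sum_const, nsmul_eq_mul, htrees]

lemma lapMatrix_mulVec_twoForestPotential (G : SimpleGraph V) [DecidableRel G.Adj] (r s v : V) :
    (G.lapMatrix ℝ *ᵥ fun x => (G.twoForestPotential r s x : ℝ)) v =
      {T | T ≤ G ∧ T.IsTree}.ncard * ((if v = r then 1 else 0) - if v = s then 1 else 0) := by
  rw [lapMatrix_mulVec_apply, ← card_neighborFinset_eq_degree, ← nsmul_eq_mul,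
    ← Finset.sum_const, ← Finset.sum_sub_distrib, ← sum_ncard_hasPathVia_sub]
  rw [← Finset.sum_subset (Finset.subset_univ (G.neighborFinset v)) fun u _ hu => ?_]
  · exact Finset.sum_congr rfl fun u hu =>
      twoForestPotential_sub_of_adj ((mem_neighborFinset ..).mp hu)
  · rw [mem_neighborFinset] at hu
    rw [ncard_isTree_hasPathVia_of_not_adj hu,
      ncard_isTree_hasPathVia_of_not_adj fun h => hu h.symm, sub_self]

end Flow

lemma ncard_setOf_isSpanning_spanningCoe (G : SimpleGraph V) (P : SimpleGraph V → Prop) :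
    {H : G.Subgraph | H.IsSpanning ∧ P H.spanningCoe}.ncard = {K | K ≤ G ∧ P K}.ncard := by
  refine Set.ncard_congr (fun H _ => H.spanningCoe) (fun H hH => ⟨H.spanningCoe_le, hH.2⟩) ?_ ?_
  · intro H₁ H₂ h₁ h₂ heq
    ext1
    · rw [h₁.1.verts_eq_univ, h₂.1.verts_eq_univ]
    · exact Subgraph.spanningCoe_inj.mp heq
  · rintro K ⟨hle, hK⟩
    exact ⟨toSubgraph K hle, ⟨toSubgraph.isSpanning K hle, hK⟩, rfl⟩

lemma lapMat_adj_eq_lapMatrix {N : ℕ} (G : SimpleGraph (Fin N)) [DecidableRel G.Adj] :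
    lapMat (fun i j => if G.Adj i j then (1 : ℝ) else 0) = G.lapMatrix ℝ := by
  ext i j
  by_cases h : i = j
  · subst h
    simp [lapMat, lapMatrix, degMatrix, degree_eq_sum_if_adj]
  · simp [lapMat, lapMatrix, degMatrix, h]

end SimpleGraph

open SimpleGraph

lemma ncard_isSpanningTree_hasPathThrough {V : Type*} (G : SimpleGraph V) (r s m n : V) :
    {H : G.Subgraph | IsSpanningTree H ∧ HasPathThrough H r s m n}.ncard =
      {T | T ≤ G ∧ T.IsTree ∧ T.HasPathVia r s m n}.ncard := by
  simp only [IsSpanningTree, and_assoc]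
  exact ncard_setOf_isSpanning_spanningCoe G fun T => T.IsTree ∧ T.HasPathVia r s m n

lemma ncard_isSpanningTree {V : Type*} (G : SimpleGraph V) :
    {H : G.Subgraph | IsSpanningTree H}.ncard = {T | T ≤ G ∧ T.IsTree}.ncard :=
  ncard_setOf_isSpanning_spanningCoe G IsTree

theorem shapiro_electrical_lemma {N : ℕ} (G : SimpleGraph (Fin N))
    [DecidableRel G.Adj] (hconn : G.Connected)
    (r s m n : Fin N) (he : G.Adj m n)
    (ψ : Fin N → ℝ)
    (hψ : (lapMat (fun i j => if G.Adj i j then (1:ℝ) else 0)).mulVec ψ =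
      dipole r s) :
    ψ m - ψ n =
      ((Set.ncard {H : G.Subgraph | IsSpanningTree H ∧ HasPathThrough H r s m n}
          : ℝ) -
        (Set.ncard {H : G.Subgraph | IsSpanningTree H ∧ HasPathThrough H r s n m}
          : ℝ)) /
      (Set.ncard {H : G.Subgraph | IsSpanningTree H} : ℝ) := by
  set φ : Fin N → ℝ := fun v => G.twoForestPotential r s v
  set t : ℝ := ↑({T | T ≤ G ∧ T.IsTree}.ncard)
  have ht : t ≠ 0 := by
    obtain ⟨T, hle, hT⟩ := hconn.exists_isTree_le
    exact Nat.cast_ne_zero.mpr (Set.ncard_pos (s := {T | T ≤ G ∧ T.IsTree}) |>.mpr ⟨T, hle, hT⟩).ne'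
  have hharmonic : G.lapMatrix ℝ *ᵥ (ψ - t⁻¹ • φ) = 0 := by
    ext v
    rw [mulVec_sub, mulVec_smul, ← lapMat_adj_eq_lapMatrix, hψ, Pi.sub_apply, Pi.smul_apply,
      lapMat_adj_eq_lapMatrix, lapMatrix_mulVec_twoForestPotential, smul_eq_mul,
      inv_mul_cancel_left₀ ht]
    simp [dipole]
  have hmn := (lapMatrix_mulVec_eq_zero_iff_forall_adj G).mp hharmonic m n he
  rw [ncard_isSpanningTree_hasPathThrough, ncard_isSpanningTree_hasPathThrough,
    ncard_isSpanningTree, ← twoForestPotential_sub_of_adj he]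
  change ψ m - ψ n = (φ m - φ n) / t
  simp only [Pi.sub_apply, Pi.smul_apply, smul_eq_mul] at hmn
  rw [div_eq_inv_mul]
  linarith
end
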